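/- The map sending a Grassmann necklace (I_1,...,I_n) to the decorated permutation π^: defined by: π(i) = j if I_{i+1} = (I_i \ {i}) ∪ {j} with j ≠ i; π(i) = i with col(i) = 1 if I_{i+1} = I_i and i ∉ I_i; π(i) = i with col(i) = -1 if I_{i+1} = I_i and i ∈ I_i, is a bijection between Grassmann necklaces on [n] and decorated permutations of [n]. Its inverse sends (π, col) to the necklace with I_r = { i ∈ [n] : i <_r π⁻¹(i), or π(i) = i and col(i) = -1 }, where <_r denotes the cyclic order starting at r. -/

import Mathlib

/-!
Walking around the cycle `r ↦ r + 1`, an element `x` enters a necklace only at the step `r` with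
`π r = x` and leaves it only at step `x`. So a necklace is determined by its permutation together
with the membership of the fixed points, which the colouring records; this gives the formula for
`I_r` in terms of the cyclic order. Conversely, the element entering at each step defines an
injective, hence bijective, map: an element entering at two steps `a ≠ b` would have to leave on
both arcs between them. The sizes `#I_r` are non-increasing around the cycle, hence constant, which
is why an entering element was never present before.
-/

open Finset

/-- Position of `a` in the cyclic (linear) order starting at `t` on `Fin n`. -/
def cval {n : ℕ} (t a : Fin n) : ℕ := ((a - t : Fin n) : ℕ)

/-- Gale order on finsets of `Fin n` induced by the linear order with key `f`:
compare the sorted lists of keys coordinatewise. -/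
def galeLEKey {n : ℕ} (f : Fin n → ℕ) (A B : Finset (Fin n)) : Prop :=
  List.Forall₂ (· ≤ ·) ((A.image f).sort (· ≤ ·)) ((B.image f).sort (· ≤ ·))

/-- Gale order `≤_t` induced by the cyclic order starting at `t`. -/
def galeLE {n : ℕ} (t : Fin n) (A B : Finset (Fin n)) : Prop :=
  galeLEKey (cval t) A B

/-- The set of maximal elements of `D` w.r.t. `≤_a` (a singleton when `D` is nonempty). -/
def cmax {n : ℕ} (a : Fin n) (D : Finset (Fin n)) : Finset (Fin n) :=
  D.filter (fun x => ∀ y ∈ D, cval a y ≤ cval a x)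

/-- The set of minimal elements of `D` w.r.t. `≤_a` (a singleton when `D` is nonempty). -/
def cmin {n : ℕ} (a : Fin n) (D : Finset (Fin n)) : Finset (Fin n) :=
  D.filter (fun x => ∀ y ∈ D, cval a x ≤ cval a y)

/-- A Grassmann necklace on `[n]`. -/
def IsGrassmannNecklace {n : ℕ} [NeZero n] (I : Fin n → Finset (Fin n)) : Prop :=
  ∀ i : Fin n,
    (i ∈ I i → ∃ j : Fin n, I (i + 1) = insert j (I i \ {i})) ∧
    (i ∉ I i → I (i + 1) = I i)

/-- A decorated permutation: a permutation with fixed points colored by `1` or `-1`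
(non-fixed points carry the dummy color `1`). -/
structure DecoratedPerm (n : ℕ) where
  π : Equiv.Perm (Fin n)
  col : Fin n → ℤ
  col_fixed : ∀ i, π i = i → col i = 1 ∨ col i = -1
  col_nonfixed : ∀ i, π i ≠ i → col i = 1

/-- The Grassmann necklace associated to a decorated permutation:
`I_r = { i : i <_r π⁻¹(i), or π(i) = i and col(i) = -1 }`. -/
def necklaceOf {n : ℕ} (P : DecoratedPerm n) : Fin n → Finset (Fin n) :=
  fun r => Finset.univ.filter
    (fun i => cval r i < cval r (P.π.symm i) ∨ (P.π i = i ∧ P.col i = -1))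

/-- The forward map from Grassmann necklaces to decorated permutations:
`P` corresponds to the necklace `I`. -/
def Corresponds {n : ℕ} [NeZero n] (I : Fin n → Finset (Fin n)) (P : DecoratedPerm n) : Prop :=
  ∀ i : Fin n,
    ((I (i + 1) = I i ∧ i ∉ I i) → (P.π i = i ∧ P.col i = 1)) ∧
    ((I (i + 1) = I i ∧ i ∈ I i) → (P.π i = i ∧ P.col i = -1)) ∧
    (∀ j : Fin n, j ≠ i → i ∈ I i → I (i + 1) = insert j (I i \ {i}) → P.π i = j)

/-- `phiSet I j a` is `{j}` if `j ∈ I_a`, and otherwise `{max_a (I_a \ I_j)}`. -/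
def phiSet {n : ℕ} (I : Fin n → Finset (Fin n)) (j a : Fin n) : Finset (Fin n) :=
  if j ∈ I a then {j} else cmax a (I a \ I j)

/-- One pass of the contraction algorithm (fuel-indexed; the loop walks `a ← a+1`). -/
def contractLoop {n : ℕ} [NeZero n] (π : Equiv.Perm (Fin n)) (j : Fin n) :
    ℕ → (Fin n → Fin n) → (Fin n → ℤ) → Fin n → Fin n →
      (Fin n → Fin n) × (Fin n → ℤ)
  | 0, μ, c, q, a => (Function.update μ a q, c)
  | fuel + 1, μ, c, q, a =>
    if π a = j then (Function.update μ a q, c)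
    else if q = a ∨ (cval (a + 1) q < cval (a + 1) (π a) ∧
                      cval (a + 1) (π a) < cval (a + 1) j) then
      contractLoop π j fuel (Function.update μ a q)
        (if q = a then Function.update c a 1 else c) (π a) (a + 1)
    else
      contractLoop π j fuel μ c q (a + 1)

/-- The contraction algorithm: output `(μ, col')` from `(π, col)` and `j`. -/
def contractAlg {n : ℕ} [NeZero n] (π : Equiv.Perm (Fin n)) (col : Fin n → ℤ) (j : Fin n) :
    (Fin n → Fin n) × (Fin n → ℤ) :=
  contractLoop π j n (Function.update (⇑π) j j) (Function.update col j 1) (π j) (j + 1)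

/-- One pass of the restriction algorithm (the loop walks `a ← a-1`). -/
def restrictLoop {n : ℕ} [NeZero n] (π : Equiv.Perm (Fin n)) (j : Fin n) :
    ℕ → (Fin n → Fin n) → (Fin n → ℤ) → Fin n → Fin n →
      (Fin n → Fin n) × (Fin n → ℤ)
  | 0, μ, c, q, a => (Function.update μ a q, c)
  | fuel + 1, μ, c, q, a =>
    if π a = j then (Function.update μ a q, c)
    else if q = a ∨ (cval a j < cval a (π a) ∧ cval a (π a) < cval a q) then
      restrictLoop π j fuel (Function.update μ a q)
        (if q = a then Function.update c a 1 else c) (π a) (a - 1)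
    else
      restrictLoop π j fuel μ c q (a - 1)

/-- The restriction algorithm: output `(μ, col')` from `(π, col)` and `j`. -/
def restrictAlg {n : ℕ} [NeZero n] (π : Equiv.Perm (Fin n)) (col : Fin n → ℤ) (j : Fin n) :
    (Fin n → Fin n) × (Fin n → ℤ) :=
  restrictLoop π j n (Function.update (⇑π) j j) (Function.update col j 1) (π j) (j - 1)


open Fin.NatCast

section CyclicOrder

variable {n : ℕ}

lemma cval_lt (t a : Fin n) : cval t a < n := (a - t).isLt

variable [NeZero n]

lemma cval_self (t : Fin n) : cval t t = 0 := by simp [cval]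

lemma cval_eq_zero_iff {t a : Fin n} : cval t a = 0 ↔ a = t := by
  rw [cval, Fin.val_eq_zero_iff, sub_eq_zero]

lemma add_cval (t a : Fin n) : t + (cval t a : Fin n) = a := by
  rw [cval, Fin.cast_val_eq_self, add_sub_cancel]

lemma cval_add_natCast (t : Fin n) {k : ℕ} (hk : k < n) : cval t (t + (k : Fin n)) = k := by
  rw [cval, add_sub_cancel_left, Fin.val_natCast, Nat.mod_eq_of_lt hk]

lemma cval_succ (t a : Fin n) : cval (t + 1) a = if a = t then n - 1 else cval t a - 1 := by
  obtain ⟨m, rfl⟩ := Nat.exists_eq_succ_of_ne_zero (NeZero.ne n)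
  rw [cval, show a - (t + 1) = a - t - 1 by abel, Fin.coe_sub_one]
  simp only [sub_eq_zero, cval, Nat.succ_sub_one]

lemma cval_succ_self (t : Fin n) : cval (t + 1) t = n - 1 := by
  rw [cval_succ, if_pos rfl]

lemma cval_rebase (s t a : Fin n) :
    cval t a = if cval s t ≤ cval s a then cval s a - cval s t else n + cval s a - cval s t := by
  have h : a - t = (a - s) - (t - s) := by abel
  unfold cval
  rw [h]
  split_ifs with hle
  · exact Fin.coe_sub_iff_le.mpr hle
  · exact Fin.coe_sub_iff_lt.mpr (not_le.mp hle)

lemma cval_succ_lt_cval_succ_iff {t a b : Fin n} (hab : a ≠ b) :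
    cval (t + 1) a < cval (t + 1) b ↔ b = t ∨ (a ≠ t ∧ cval t a < cval t b) := by
  have ha := cval_lt t a
  have hb := cval_lt t b
  rw [cval_succ, cval_succ]
  by_cases hat : a = t <;> by_cases hbt : b = t
  · exact absurd (hat.trans hbt.symm) hab
  · simp only [hat, hbt, if_true, if_false, false_or]
    omega
  · simp only [hat, hbt, if_true, if_false, true_or, iff_true]
    omega
  · have ha0 : cval t a ≠ 0 := fun h => hat (cval_eq_zero_iff.mp h)
    have hb0 : cval t b ≠ 0 := fun h => hbt (cval_eq_zero_iff.mp h)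
    simp only [hat, hbt, if_false, false_or, ne_eq, not_false_eq_true, true_and]
    omega

lemma cval_induction {p : Fin n → Prop} {s t : Fin n} (hs : p s)
    (hstep : ∀ r, r ≠ t → p r → p (r + 1)) {r : Fin n} (hr : cval s r ≤ cval s t) : p r := by
  suffices h : ∀ k ≤ cval s t, p (s + (k : Fin n)) by simpa only [add_cval] using h _ hr
  intro k hk
  induction k with
  | zero => simpa using hs
  | succ k ih =>
    have hkt : s + (k : Fin n) ≠ t := by
      intro h
      have := cval_add_natCast s (k := k) (by have := cval_lt s t; omega)
      rw [h] at this
      omega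
    rw [Nat.cast_succ, ← add_assoc]
    exact hstep _ hkt (ih (by omega))

lemma forall_of_cyclic_step {p : Fin n → Prop} (s : Fin n) (hs : p s)
    (hstep : ∀ r, p r → p (r + 1)) (r : Fin n) : p r := by
  obtain ⟨t, rfl⟩ : ∃ t, t + 1 = s := ⟨s - 1, sub_add_cancel s 1⟩
  refine cval_induction hs (t := t) (fun r _ => hstep r) ?_
  rw [cval_succ_self]
  have := cval_lt (t + 1) r
  omega

lemma cval_succ_lt_of_cval_succ_lt {a b j : Fin n} (hab : a ≠ b)
    (h : cval (a + 1) j < cval (a + 1) b) : cval (b + 1) a < cval (b + 1) j := by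
  have hba : b ≠ a := Ne.symm hab
  have hja : j ≠ a := by
    intro hj
    rw [hj, cval_succ_self] at h
    have := cval_lt (a + 1) b
    omega
  have hb0 : cval a b ≠ 0 := fun h => hba (cval_eq_zero_iff.mp h)
  have hj0 : cval a j ≠ 0 := fun h => hja (cval_eq_zero_iff.mp h)
  have := cval_lt a j
  have := cval_lt a b
  rw [cval_succ, cval_succ, if_neg hja, if_neg hba] at h
  rw [cval_succ, cval_succ, if_neg hab, cval_rebase a b a, cval_self]
  by_cases hjb : j = b
  · subst hjb
    simp only [if_true]
    split_ifs <;> omega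
  · rw [if_neg hjb, cval_rebase a b j]
    split_ifs <;> omega

end CyclicOrder

namespace IsGrassmannNecklace

variable {n : ℕ} [NeZero n] {I : Fin n → Finset (Fin n)}

lemma mem_succ_of_mem (hI : IsGrassmannNecklace I) {i j : Fin n} (hj : j ∈ I i) (hji : j ≠ i) :
    j ∈ I (i + 1) := by
  by_cases hi : i ∈ I i
  · obtain ⟨k, hk⟩ := (hI i).1 hi
    rw [hk]
    exact mem_insert_of_mem (mem_sdiff.mpr ⟨hj, notMem_singleton.mpr hji⟩)
  · rwa [(hI i).2 hi]

lemma mem_of_cval_le (hI : IsGrassmannNecklace I) {s r j : Fin n} (hj : j ∈ I s)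
    (hr : cval s r ≤ cval s j) : j ∈ I r :=
  cval_induction (p := fun r => j ∈ I r) hj
    (fun _ hne h => hI.mem_succ_of_mem h (Ne.symm hne)) hr

lemma cval_lt_of_mem_of_notMem (hI : IsGrassmannNecklace I) {s r j : Fin n} (hj : j ∈ I s)
    (hr : j ∉ I r) : cval s j < cval s r :=
  lt_of_not_ge fun h => hr (hI.mem_of_cval_le hj h)

lemma card_succ_le (hI : IsGrassmannNecklace I) (i : Fin n) : #(I (i + 1)) ≤ #(I i) := by
  by_cases hi : i ∈ I i
  · obtain ⟨j, hj⟩ := (hI i).1 hi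
    rw [hj, sdiff_singleton_eq_erase]
    calc #(insert j ((I i).erase i)) ≤ #((I i).erase i) + 1 := card_insert_le _ _
      _ = #(I i) := card_erase_add_one hi
  · rw [(hI i).2 hi]

lemma card_eq (hI : IsGrassmannNecklace I) (i j : Fin n) : #(I i) = #(I j) := by
  have hle : ∀ i j, #(I i) ≤ #(I j) := fun i j =>
    forall_of_cyclic_step (p := fun r => #(I r) ≤ #(I j)) j le_rfl
      (fun r h => (hI.card_succ_le r).trans h) i
  exact le_antisymm (hle i j) (hle j i)

lemma notMem_of_succ_eq_insert (hI : IsGrassmannNecklace I) {i j : Fin n} (hi : i ∈ I i)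
    (hji : j ≠ i) (h : I (i + 1) = insert j (I i \ {i})) : j ∉ I i := by
  intro hj
  have hsucc : I (i + 1) = (I i).erase i := by
    rw [h, insert_eq_of_mem (mem_sdiff.mpr ⟨hj, notMem_singleton.mpr hji⟩),
      sdiff_singleton_eq_erase]
  have := hI.card_eq (i + 1) i
  rw [hsucc, card_erase_of_mem hi] at this
  have := card_pos.mpr ⟨i, hi⟩
  omega

end IsGrassmannNecklace

section NecklacePerm

variable {n : ℕ} [NeZero n] {I : Fin n → Finset (Fin n)}

/-- `I (i + 1) \ I i` is empty or a singleton (`necklacePerm_spec`); `min'` extracts its element. -/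
def necklacePerm (I : Fin n → Finset (Fin n)) (i : Fin n) : Fin n :=
  if h : (I (i + 1) \ I i).Nonempty then (I (i + 1) \ I i).min' h else i

lemma necklacePerm_spec (hI : IsGrassmannNecklace I) (i : Fin n) :
    (I (i + 1) = I i ∧ necklacePerm I i = i) ∨
    (i ∈ I i ∧ necklacePerm I i ≠ i ∧ necklacePerm I i ∉ I i ∧
      I (i + 1) = insert (necklacePerm I i) (I i \ {i})) := by
  have of_eq : I (i + 1) = I i → necklacePerm I i = i := fun h => by simp [necklacePerm, h]
  by_cases hi : i ∈ I i
  · obtain ⟨j, hj⟩ := (hI i).1 hi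
    by_cases hji : j = i
    · have h : I (i + 1) = I i := by rw [hj, hji, sdiff_singleton_eq_erase, insert_erase hi]
      exact Or.inl ⟨h, of_eq h⟩
    · have hjI := hI.notMem_of_succ_eq_insert hi hji hj
      have hdiff : I (i + 1) \ I i = {j} := by
        rw [hj]
        ext x
        simp only [mem_sdiff, mem_insert, mem_singleton]
        constructor
        · rintro ⟨hx | ⟨hx, _⟩, hxI⟩
          exacts [hx, absurd hx hxI]
        · rintro rfl
          exact ⟨Or.inl rfl, hjI⟩
      have hperm : necklacePerm I i = j := by simp [necklacePerm, hdiff]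
      rw [hperm]
      exact Or.inr ⟨hi, hji, hjI, hj⟩
  · have h := (hI i).2 hi
    exact Or.inl ⟨h, of_eq h⟩

lemma necklacePerm_injective (hI : IsGrassmannNecklace I) :
    Function.Injective (necklacePerm I) := by
  have fixed_ne_moving : ∀ a b, necklacePerm I a = necklacePerm I b → I (a + 1) = I a →
      necklacePerm I a = a → necklacePerm I b ∉ I b →
      I (b + 1) = insert (necklacePerm I b) (I b \ {b}) → False := by
    intro a b hab ha hfa hb hb'
    rw [← hab, hfa] at hb hb'
    have haa : a ∈ I a := hI.mem_of_cval_le (hb' ▸ mem_insert_self a _) le_rfl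
    refine hb (hI.mem_of_cval_le (ha ▸ haa : a ∈ I (a + 1)) ?_)
    rw [cval_succ_self]
    have := cval_lt (a + 1) b
    omega
  intro a b hab
  by_contra hne
  rcases necklacePerm_spec hI a with ⟨ha, hfa⟩ | ⟨_, _, hfa, ha⟩ <;>
    rcases necklacePerm_spec hI b with ⟨hb, hfb⟩ | ⟨_, _, hfb, hb⟩
  · exact hne (hfa.symm.trans (hab.trans hfb))
  · exact fixed_ne_moving a b hab ha hfa hfb hb
  · exact fixed_ne_moving b a hab.symm hb hfb hfa ha
  · -- the common value enters at `a` and at `b`, so it has to leave on both arcs between them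
    rw [← hab] at hfb hb
    have h₁ := hI.cval_lt_of_mem_of_notMem (ha ▸ mem_insert_self _ _) hfb
    have h₂ := hI.cval_lt_of_mem_of_notMem (hb ▸ mem_insert_self _ _) hfa
    exact (cval_succ_lt_of_cval_succ_lt hne h₁).not_gt h₂

end NecklacePerm

attribute [ext] DecoratedPerm

section Correspondence

variable {n : ℕ} [NeZero n] {I J : Fin n → Finset (Fin n)} {P : DecoratedPerm n}

def NecklaceStep (P : DecoratedPerm n) (I : Fin n → Finset (Fin n)) : Prop :=
  ∀ r, I (r + 1) = if P.π r = r then I r else insert (P.π r) (I r \ {r})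

/-- A non-fixed `x` is never in `I (x + 1)`, so only at fixed points is a starting value needed. -/
lemma NecklaceStep.eq (hI : NecklaceStep P I) (hJ : NecklaceStep P J)
    (hfix : ∀ x, P.π x = x → (x ∈ I x ↔ x ∈ J x)) : I = J := by
  funext r
  ext x
  have hstep : ∀ r, (x ∈ I r ↔ x ∈ J r) → (x ∈ I (r + 1) ↔ x ∈ J (r + 1)) := by
    intro r h
    rw [hI r, hJ r]
    split_ifs
    · exact h
    · simp only [mem_insert, mem_sdiff, h]
  by_cases hx : P.π x = x
  · exact forall_of_cyclic_step x (hfix x hx) hstep r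
  · have hleave : ∀ K, NecklaceStep P K → x ∉ K (x + 1) := fun K hK => by
      simp [hK x, hx, Ne.symm hx]
    exact forall_of_cyclic_step (x + 1) (iff_of_false (hleave I hI) (hleave J hJ)) hstep r

lemma NecklaceStep.isGrassmannNecklace (hI : NecklaceStep P I)
    (hmem : ∀ r, P.π r ≠ r → r ∈ I r) : IsGrassmannNecklace I := by
  intro r
  constructor
  · intro hr
    by_cases hfix : P.π r = r
    · refine ⟨r, ?_⟩
      rw [hI r, if_pos hfix, sdiff_singleton_eq_erase, insert_erase hr]
    · exact ⟨P.π r, by rw [hI r, if_neg hfix]⟩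
  · intro hr
    rw [hI r, if_pos (not_not.mp (mt (hmem r) hr))]

lemma NecklaceStep.corresponds (hI : NecklaceStep P I)
    (hfix : ∀ r, P.π r = r → (r ∈ I r ↔ P.col r = -1))
    (hmove : ∀ r, P.π r ≠ r → r ∈ I r ∧ P.π r ∉ I r) : Corresponds I P := by
  have fixed_of_eq : ∀ r, I (r + 1) = I r → P.π r = r := fun r h => by
    by_contra hr
    have := (hmove r hr).2
    rw [← h, hI r, if_neg hr] at this
    exact this (mem_insert_self _ _)
  intro r
  refine ⟨fun ⟨h, hr⟩ => ?_, fun ⟨h, hr⟩ => ?_, fun j hjr hr h => ?_⟩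
  · have hfr := fixed_of_eq r h
    refine ⟨hfr, (P.col_fixed r hfr).resolve_right fun hc => hr ((hfix r hfr).mpr hc)⟩
  · have hfr := fixed_of_eq r h
    exact ⟨hfr, (hfix r hfr).mp hr⟩
  · have hr' : r ∉ I (r + 1) := by simp [h, Ne.symm hjr]
    have hfr : P.π r ≠ r := fun hfr => hr' (by rwa [hI r, if_pos hfr])
    rw [hI r, if_neg hfr] at h
    exact (insert_inj (fun h => (hmove r hfr).2 (mem_sdiff.mp h).1)).mp h

lemma Corresponds.necklaceStep (hI : IsGrassmannNecklace I) (hC : Corresponds I P) :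
    NecklaceStep P I := by
  intro r
  by_cases hr : r ∈ I r
  · obtain ⟨j, hj⟩ := (hI r).1 hr
    by_cases hjr : j = r
    · have h : I (r + 1) = I r := by rw [hj, hjr, sdiff_singleton_eq_erase, insert_erase hr]
      rw [if_pos ((hC r).2.1 ⟨h, hr⟩).1, h]
    · rw [(hC r).2.2 j hjr hr hj, if_neg hjr, hj]
  · rw [(hI r).2 hr, if_pos ((hC r).1 ⟨(hI r).2 hr, hr⟩).1]

lemma Corresponds.mem_self_iff (hI : IsGrassmannNecklace I) (hC : Corresponds I P) {r : Fin n}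
    (hr : P.π r = r) : r ∈ I r ↔ P.col r = -1 := by
  have h : I (r + 1) = I r := by rw [hC.necklaceStep hI r, if_pos hr]
  by_cases hmem : r ∈ I r
  · exact iff_of_true hmem ((hC r).2.1 ⟨h, hmem⟩).2
  · refine iff_of_false hmem ?_
    rw [((hC r).1 ⟨h, hmem⟩).2]
    decide

lemma Corresponds.eq (hI : IsGrassmannNecklace I) (hJ : IsGrassmannNecklace J)
    (hCI : Corresponds I P) (hCJ : Corresponds J P) : I = J :=
  (hCI.necklaceStep hI).eq (hCJ.necklaceStep hJ) fun _ hx =>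
    (hCI.mem_self_iff hI hx).trans (hCJ.mem_self_iff hJ hx).symm

end Correspondence

section NecklaceOf

variable {n : ℕ} (P : DecoratedPerm n)

lemma mem_necklaceOf_of_fixed {x : Fin n} (hx : P.π x = x) (r : Fin n) :
    x ∈ necklaceOf P r ↔ P.col x = -1 := by
  have hs : P.π.symm x = x := by rw [Equiv.symm_apply_eq, hx]
  simp [necklaceOf, hs, hx]

lemma mem_necklaceOf_of_not_fixed {x : Fin n} (hx : P.π x ≠ x) (r : Fin n) :
    x ∈ necklaceOf P r ↔ cval r x < cval r (P.π.symm x) := by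
  simp [necklaceOf, hx]

variable [NeZero n]

lemma necklaceStep_necklaceOf : NecklaceStep P (necklaceOf P) := by
  intro r
  ext x
  by_cases hx : P.π x = x
  · have hxr : P.π r ≠ r → x ≠ P.π r ∧ x ≠ r := fun hr =>
      ⟨fun h => hr (P.π.injective (by rw [← h, hx])), fun h => hr (h ▸ hx)⟩
    split_ifs with hr
    · simp only [mem_necklaceOf_of_fixed P hx]
    · simp [mem_necklaceOf_of_fixed P hx, hxr hr]
  · have hxs : x ≠ P.π.symm x := fun h => hx (P.π.eq_symm_apply.mp h)
    rw [mem_necklaceOf_of_not_fixed P hx, cval_succ_lt_cval_succ_iff hxs, Equiv.symm_apply_eq]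
    split_ifs with hr
    · have hxr : x ≠ r := fun h => hx (h ▸ hr)
      simp [mem_necklaceOf_of_not_fixed P hx, hxr, hr]
    · simp only [mem_insert, mem_sdiff, mem_singleton, mem_necklaceOf_of_not_fixed P hx]
      tauto

lemma self_mem_necklaceOf {r : Fin n} (hr : P.π r ≠ r) : r ∈ necklaceOf P r := by
  rw [mem_necklaceOf_of_not_fixed P hr, cval_self, Nat.pos_iff_ne_zero, Ne, cval_eq_zero_iff,
    Equiv.symm_apply_eq]
  exact Ne.symm hr

lemma apply_notMem_necklaceOf {r : Fin n} (hr : P.π r ≠ r) : P.π r ∉ necklaceOf P r := by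
  have hr' : P.π (P.π r) ≠ P.π r := fun h => hr (P.π.injective h)
  rw [mem_necklaceOf_of_not_fixed P hr', Equiv.symm_apply_apply, cval_self]
  exact Nat.not_lt_zero _

lemma isGrassmannNecklace_necklaceOf : IsGrassmannNecklace (necklaceOf P) :=
  (necklaceStep_necklaceOf P).isGrassmannNecklace fun _ => self_mem_necklaceOf P

lemma corresponds_necklaceOf : Corresponds (necklaceOf P) P :=
  (necklaceStep_necklaceOf P).corresponds (fun r hr => mem_necklaceOf_of_fixed P hr r)
    fun _ hr => ⟨self_mem_necklaceOf P hr, apply_notMem_necklaceOf P hr⟩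

end NecklaceOf

namespace DecoratedPerm

variable {n : ℕ} [NeZero n] {I : Fin n → Finset (Fin n)}

noncomputable def ofNecklace (hI : IsGrassmannNecklace I) : DecoratedPerm n where
  π := Equiv.ofBijective (necklacePerm I) (Finite.injective_iff_bijective.mp
    (necklacePerm_injective hI))
  col i := if necklacePerm I i = i ∧ i ∈ I i then -1 else 1
  col_fixed i _ := by split_ifs <;> simp
  col_nonfixed _ hi := if_neg fun h => hi h.1

lemma corresponds_ofNecklace (hI : IsGrassmannNecklace I) : Corresponds I (ofNecklace hI) := by
  have hstep : NecklaceStep (ofNecklace hI) I := fun r => by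
    rcases necklacePerm_spec hI r with ⟨h, hf⟩ | ⟨_, hf, _, h⟩ <;> simp [ofNecklace, h, hf]
  refine hstep.corresponds (fun r hr => ?_) fun r hr => ?_
  · simp_all [ofNecklace]
  · rcases necklacePerm_spec hI r with ⟨_, hf⟩ | ⟨hmem, _, hnot, _⟩
    · exact absurd hf hr
    · exact ⟨hmem, hnot⟩

lemma _root_.Corresponds.eq_ofNecklace (hI : IsGrassmannNecklace I) {P : DecoratedPerm n}
    (hC : Corresponds I P) : P = ofNecklace hI := by
  have hπ : ∀ r, P.π r = necklacePerm I r := fun r => by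
    rcases necklacePerm_spec hI r with ⟨h, hf⟩ | ⟨hr, hf, _, h⟩
    · rw [hf]
      by_cases hr : r ∈ I r
      exacts [((hC r).2.1 ⟨h, hr⟩).1, ((hC r).1 ⟨h, hr⟩).1]
    · exact (hC r).2.2 _ hf hr h
  refine DecoratedPerm.ext (Equiv.ext hπ) (funext fun r => ?_)
  show P.col r = if necklacePerm I r = r ∧ r ∈ I r then -1 else 1
  rw [← hπ]
  by_cases hr : P.π r = r
  · have := hC.mem_self_iff hI hr
    rcases P.col_fixed r hr with hc | hc <;> simp_all
  · simp [hr, P.col_nonfixed r hr]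

end DecoratedPerm

/-- the map from Grassmann necklaces to decorated permutations is a bijection,
with inverse given by `I_r = { i : i <_r π⁻¹(i) or (π(i) = i and col(i) = -1) }`. -/
theorem necklace_decoratedPerm_bijection (n : ℕ) [NeZero n] :
    (∀ P : DecoratedPerm n,
        IsGrassmannNecklace (necklaceOf P) ∧ Corresponds (necklaceOf P) P) ∧
    (∀ I : Fin n → Finset (Fin n), IsGrassmannNecklace I →
        ∃! P : DecoratedPerm n, Corresponds I P) ∧
    (∀ (I : Fin n → Finset (Fin n)) (P : DecoratedPerm n),
        IsGrassmannNecklace I → Corresponds I P → I = necklaceOf P) :=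
  ⟨fun P => ⟨isGrassmannNecklace_necklaceOf P, corresponds_necklaceOf P⟩,
    fun _ hI => ⟨.ofNecklace hI, DecoratedPerm.corresponds_ofNecklace hI,
      fun _ hC => hC.eq_ofNecklace hI⟩,
    fun _ P hI hC => hC.eq hI (isGrassmannNecklace_necklaceOf P) (corresponds_necklaceOf P)⟩
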